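/- The range (column space) of ρ₆₆ equals the 6-dimensional subspace of ℂ⁹ consisting of all vectors V = (V₀,…,V₈) satisfying V₆ = V₂ + V₄, V₇ = −V₅ and V₈ = V₁ + 2V₃ − V₀; equivalently, all vectors of the form (A, B, C, D, E, F, C+E, −F, B+2D−A) with A, B, C, D, E, F ∈ ℂ. -/

import Mathlib

/-!
The rows of `ρ₆₆` indexed by `(2,0)`, `(2,1)`, `(2,2)` are the combinations `r₀₂ + r₁₁`, `-r₁₂`
and `r₀₁ + 2 r₁₀ - r₀₀` of the others, so every vector `ρ₆₆ W` satisfies the three relations.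
Conversely, a vector satisfying them is determined by its six coordinates with first index `0`
or `1`, and these are matched by `ρ₆₆ W` for an explicit `W` supported on the same six indices.
-/

open Matrix ComplexOrder

noncomputable def N66 : Matrix (Fin 9) (Fin 9) ℂ :=
  !![1, 0, 0, 0, 0, 0, 0, 0, -1;
     0, 2, 0, -1, 0, 0, 0, 0, 0;
     0, 0, 1, 0, 0, 0, 1, 0, 0;
     0, -1, 0, 1, 0, 0, 0, 0, 1;
     0, 0, 0, 0, 1, 0, 1, 0, 0;
     0, 0, 0, 0, 0, 1, 0, -1, 0;
     0, 0, 1, 0, 1, 0, 2, 0, 0;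
     0, 0, 0, 0, 0, -1, 0, 1, 0;
     -1, 0, 0, 1, 0, 0, 0, 0, 3]

/-- The index map `(i, j) ↦ 3 i + j` from `Fin 3 × Fin 3` to `Fin 9`. -/
def idx (p : Fin 3 × Fin 3) : Fin 9 :=
  ⟨3 * p.1.val + p.2.val, by have h1 := p.1.isLt; have h2 := p.2.isLt; omega⟩

/-- The state `ρ₆₆`, viewed as an operator on `ℂ³ ⊗ ℂ³`. -/
noncomputable def rho66 : Matrix (Fin 3 × Fin 3) (Fin 3 × Fin 3) ℂ :=
  fun p q => (1 / 13 : ℂ) * N66 (idx p) (idx q)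

namespace Rho66

def RangeRelations (V : Fin 3 × Fin 3 → ℂ) : Prop :=
  V (2, 0) = V (0, 2) + V (1, 1) ∧ V (2, 1) = -V (1, 2) ∧
    V (2, 2) = V (0, 1) + 2 * V (1, 0) - V (0, 0)

theorem ext_of_rangeRelations {U V : Fin 3 × Fin 3 → ℂ} (hU : RangeRelations U)
    (hV : RangeRelations V) (h : ∀ p : Fin 3 × Fin 3, p.1 ≠ 2 → U p = V p) : U = V := by
  obtain ⟨hU₀, hU₁, hU₂⟩ := hU
  obtain ⟨hV₀, hV₁, hV₂⟩ := hV
  funext ⟨i, j⟩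
  fin_cases i
  · exact h (0, j) (by simp)
  · exact h (1, j) (by simp)
  · fin_cases j
    · simp only [Fin.reduceFinMk, Fin.isValue, hU₀, hV₀, h (0, 2) (by decide), h (1, 1) (by decide)]
    · simp only [Fin.reduceFinMk, Fin.isValue, hU₁, hV₁, h (1, 2) (by decide)]
    · simp only [Fin.reduceFinMk, Fin.isValue, hU₂, hV₂, h (0, 0) (by decide), h (0, 1) (by decide),
        h (1, 0) (by decide)]

theorem row_two_zero : rho66 (2, 0) = rho66 (0, 2) + rho66 (1, 1) := by
  funext ⟨i, j⟩
  fin_cases i <;> fin_cases j <;> norm_num [rho66, N66, idx]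

theorem row_two_one : rho66 (2, 1) = -rho66 (1, 2) := by
  funext ⟨i, j⟩
  fin_cases i <;> fin_cases j <;> norm_num [rho66, N66, idx]

theorem row_two_two : rho66 (2, 2) = rho66 (0, 1) + (2 : ℂ) • rho66 (1, 0) - rho66 (0, 0) := by
  funext ⟨i, j⟩
  fin_cases i <;> fin_cases j <;> norm_num [rho66, N66, idx]

theorem rangeRelations_mulVec (W : Fin 3 × Fin 3 → ℂ) : RangeRelations (rho66 *ᵥ W) := by
  refine ⟨?_, ?_, ?_⟩ <;>
    simp only [mulVec, row_two_zero, row_two_one, row_two_two, add_dotProduct, sub_dotProduct,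
      neg_dotProduct, smul_dotProduct, smul_eq_mul]

-- The leading 6 × 6 block of `N66` is unimodular; this is `13` times its inverse applied to `V`.
def preimage (V : Fin 3 × Fin 3 → ℂ) : Fin 3 × Fin 3 → ℂ := fun p =>
  13 * ![![V (0, 0), V (0, 1) + V (1, 0), V (0, 2)],
    ![V (0, 1) + 2 * V (1, 0), V (1, 1), V (1, 2)], ![0, 0, 0]] p.1 p.2

theorem mulVec_preimage_apply (V : Fin 3 × Fin 3 → ℂ) (p : Fin 3 × Fin 3) (hp : p.1 ≠ 2) :
    (rho66 *ᵥ preimage V) p = V p := by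
  obtain ⟨i, j⟩ := p
  fin_cases i <;> fin_cases j <;> first
    | exact absurd rfl hp
    | simp [mulVec, dotProduct, Fintype.sum_prod_type, Fin.sum_univ_three, rho66, N66, idx,
        preimage] <;> ring

end Rho66

/-- The range of `ρ₆₆` consists exactly of the vectors
`(A, B, C, D, E, F, C+E, -F, B+2D-A)`, i.e. those `V` with
`V₆ = V₂ + V₄`, `V₇ = -V₅` and `V₈ = V₁ + 2V₃ - V₀`. -/
theorem rho66_range :
    ∀ V : Fin 3 × Fin 3 → ℂ,
      V ∈ LinearMap.range rho66.mulVecLin ↔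
        (V (2, 0) = V (0, 2) + V (1, 1) ∧ V (2, 1) = -V (1, 2) ∧
          V (2, 2) = V (0, 1) + 2 * V (1, 0) - V (0, 0)) := by
  intro V
  constructor
  · rintro ⟨W, rfl⟩
    exact Rho66.rangeRelations_mulVec W
  · intro hV
    exact ⟨Rho66.preimage V, Rho66.ext_of_rangeRelations (Rho66.rangeRelations_mulVec _) hV
      (Rho66.mulVec_preimage_apply V)⟩
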